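/- arXiv:1011.4633 — 7 statements merged into one kernel-verified Lean document; each statement's English description precedes it below -/
import Mathlib

section
/- Let n, k, q be real constants with q ≠ 0 and set p = -2/q. Suppose G, H : ℝ × (0,∞) → ℝ are C¹ functions satisfying the second scaling-group resolving equation G − (p+n−2)H + p v H_v + 2x H_x − H H_v = k v^{q+1} for all x ∈ ℝ and v > 0. If u : D → (0,∞) is a C² function on an open domain D ⊆ ℝ × (0,∞) satisfying the parametric first-order equations u_t = r^{p-2} G(t/r², u/r^p) and u_r = r^{p-1} H(t/r², u/r^p) on D, then u is a solution of the semilinear radial heat equation u_t = u_rr + (n-1) r⁻¹ u_r + k u^{q+1} on D. -/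
/-!
Along a slice `t = const`, the equation for `u_r` is a first-order ODE in `r` whose right-hand
side is `r^(m-1) H(x, v)` with `x = t/r²`, `v = u/r^m`. Differentiating it once more with the chain
rule, and using `dx/dr = -2x/r` and `dv/dr = (H - m v)/r` along the solution, gives
`u_rr = r^(m-2) ((m-1) H - 2x H_x + (H - m v) H_v)`. Adding `(n-1) r⁻¹ u_r` and
`k u^(q+1) = r^(m-2) k v^(q+1)` (this is where `m = -2/q` enters), the resolving equation turns the
bracket into `G(x, v)`, and `r^(m-2) G(x, v) = u_t`.
-/

noncomputable section

def pdt (u : ℝ × ℝ → ℝ) (p : ℝ × ℝ) : ℝ := deriv (fun s => u (s, p.2)) p.1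

def pdr (u : ℝ × ℝ → ℝ) (p : ℝ × ℝ) : ℝ := deriv (fun s => u (p.1, s)) p.2

def pdrr (u : ℝ × ℝ → ℝ) (p : ℝ × ℝ) : ℝ :=
  deriv (fun s => deriv (fun s' => u (p.1, s')) s) p.2

/-- The semilinear radial heat equation `u_t = u_rr + (n-1) r⁻¹ u_r + k u^(q+1)`. -/
def HeatEq (n k q : ℝ) (u : ℝ × ℝ → ℝ) (p : ℝ × ℝ) : Prop :=
  pdt u p = pdrr u p + (n - 1) * (p.2)⁻¹ * pdr u p + k * u p ^ (q + 1)

open Real Filter Topology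

theorem rpow_add_one_eq_div_rpow_mul {q r w : ℝ} (hq : q ≠ 0) (hr : 0 < r) (hw : 0 ≤ w) :
    w ^ (q + 1) = (w / r ^ (-2 / q)) ^ (q + 1) * r ^ (-2 / q - 2) := by
  have hexp : -2 / q * (q + 1) = -2 / q - 2 := by field_simp; ring
  rw [div_rpow hw (rpow_nonneg hr.le _), ← rpow_mul hr.le, hexp, div_mul_cancel₀]
  exact (rpow_pos_of_pos hr _).ne'

theorem rpow_sub_one_eq_rpow_sub_two_mul {r : ℝ} (hr : r ≠ 0) (m : ℝ) :
    r ^ (m - 1) = r ^ (m - 2) * r := by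
  rw [← rpow_add_one hr]
  ring_nf

theorem hasDerivAt_uncurry_comp {F : ℝ → ℝ → ℝ} {a b : ℝ → ℝ} {a' b' s : ℝ}
    (hF : DifferentiableAt ℝ (fun p : ℝ × ℝ => F p.1 p.2) (a s, b s))
    (ha : HasDerivAt a a' s) (hb : HasDerivAt b b' s) :
    HasDerivAt (fun s => F (a s) (b s))
      (deriv (fun y => F y (b s)) (a s) * a' + deriv (F (a s)) (b s) * b') s := by
  set L := fderiv ℝ (fun p : ℝ × ℝ => F p.1 p.2) (a s, b s)
  have hL := hF.hasFDerivAt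
  have hx : deriv (fun y => F y (b s)) (a s) = L (1, 0) := by
    have hline : HasDerivAt (fun y : ℝ => (y, b s)) ((1 : ℝ), (0 : ℝ)) (a s) :=
      (hasDerivAt_id _).prodMk (hasDerivAt_const _ _)
    exact (hL.comp_hasDerivAt (a s) hline).deriv
  have hv : deriv (F (a s)) (b s) = L (0, 1) := by
    have hline : HasDerivAt (fun v : ℝ => (a s, v)) ((0 : ℝ), (1 : ℝ)) (b s) :=
      (hasDerivAt_const _ _).prodMk (hasDerivAt_id _)
    exact (hL.comp_hasDerivAt (b s) hline).deriv
  have hsplit : L (a', b') = a' * L (1, 0) + b' * L (0, 1) := by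
    have : ((a', b') : ℝ × ℝ) = a' • ((1 : ℝ), (0 : ℝ)) + b' • ((0 : ℝ), (1 : ℝ)) := by
      simp
    rw [this, map_add, map_smul, map_smul, smul_eq_mul, smul_eq_mul]
  rw [hx, hv, mul_comm _ a', mul_comm _ b', ← hsplit]
  exact hL.comp_hasDerivAt s (ha.prodMk hb)

theorem hasDerivAt_div_sq_const (t : ℝ) {r : ℝ} (hr : r ≠ 0) :
    HasDerivAt (fun s : ℝ => t / s ^ 2) (-2 * (t / r ^ 2) / r) r := by
  refine ((hasDerivAt_const r t).div (hasDerivAt_pow 2 r) (pow_ne_zero 2 hr)).congr_deriv ?_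
  field_simp
  ring

-- Normalized so that along `w' = r^(m-1) h` the derivative of `v = w/r^m` reads `(h - m v)/r`.
theorem HasDerivAt.div_rpow_const {w : ℝ → ℝ} {w' r : ℝ} (m : ℝ) (hw : HasDerivAt w w' r)
    (hr : 0 < r) :
    HasDerivAt (fun s => w s / s ^ m) ((w' / r ^ (m - 1) - m * (w r / r ^ m)) / r) r := by
  have hrm := (rpow_pos_of_pos hr m).ne'
  refine (hw.div (hasDerivAt_rpow_const (Or.inl hr.ne')) hrm).congr_deriv ?_
  rw [rpow_sub_one hr.ne']
  field_simp

theorem hasDerivAt_deriv_of_scaling_ode {w : ℝ → ℝ} {H : ℝ → ℝ → ℝ} {t m r : ℝ}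
    (hr : 0 < r)
    (hH : DifferentiableAt ℝ (fun p : ℝ × ℝ => H p.1 p.2) (t / r ^ 2, w r / r ^ m))
    (hw : ∀ᶠ s in 𝓝 r, HasDerivAt w (s ^ (m - 1) * H (t / s ^ 2) (w s / s ^ m)) s) :
    HasDerivAt (deriv w)
      (r ^ (m - 2) * ((m - 1) * H (t / r ^ 2) (w r / r ^ m)
        - 2 * (t / r ^ 2) * deriv (fun y => H y (w r / r ^ m)) (t / r ^ 2)
        + (H (t / r ^ 2) (w r / r ^ m) - m * (w r / r ^ m))
          * deriv (H (t / r ^ 2)) (w r / r ^ m))) r := by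
  have hinv := hasDerivAt_uncurry_comp hH (hasDerivAt_div_sq_const t hr.ne')
    (hw.self_of_nhds.div_rpow_const m hr)
  have hrhs := (hasDerivAt_rpow_const (p := m - 1) (Or.inl hr.ne')).mul hinv
  have hderiv : deriv w =ᶠ[𝓝 r] fun s => s ^ (m - 1) * H (t / s ^ 2) (w s / s ^ m) :=
    hw.mono fun s hs => hs.deriv
  refine (hrhs.congr_of_eventuallyEq hderiv).congr_deriv ?_
  rw [show m - 1 - 1 = m - 2 by ring, rpow_sub_one_eq_rpow_sub_two_mul hr.ne']
  field_simp
  ring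

theorem hasDerivAt_pdr {u : ℝ × ℝ → ℝ} {p : ℝ × ℝ} (hu : DifferentiableAt ℝ u p) :
    HasDerivAt (fun s => u (p.1, s)) (pdr u p) p.2 :=
  (hu.comp p.2 ((differentiableAt_const p.1).prodMk differentiableAt_id)).hasDerivAt

theorem group_resolving_to_heat_general (n k q m : ℝ) (hq : q ≠ 0) (hm : m = -2 / q)
    (G H : ℝ → ℝ → ℝ)
    (hH : ContDiffOn ℝ 1 (fun p : ℝ × ℝ => H p.1 p.2) {p : ℝ × ℝ | 0 < p.2})
    (heq2 : ∀ x : ℝ, ∀ v : ℝ, 0 < v →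
      G x v - (m + n - 2) * H x v + m * v * deriv (H x) v
        + 2 * x * deriv (fun y => H y v) x - H x v * deriv (H x) v = k * v ^ (q + 1))
    (D : Set (ℝ × ℝ)) (hD : IsOpen D) (hDpos : ∀ p ∈ D, 0 < p.2)
    (u : ℝ × ℝ → ℝ) (hu : ContDiffOn ℝ 2 u D) (hupos : ∀ p ∈ D, 0 < u p)
    (hut : ∀ p ∈ D, pdt u p = p.2 ^ (m - 2) * G (p.1 / p.2 ^ 2) (u p / p.2 ^ m))
    (hur : ∀ p ∈ D, pdr u p = p.2 ^ (m - 1) * H (p.1 / p.2 ^ 2) (u p / p.2 ^ m)) :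
    ∀ p ∈ D, HeatEq n k q u p := by
  rintro ⟨t, r⟩ hp
  have hr : 0 < r := hDpos _ hp
  have hv : 0 < u (t, r) / r ^ m := div_pos (hupos _ hp) (rpow_pos_of_pos hr m)
  have hHdiff : DifferentiableAt ℝ (fun p : ℝ × ℝ => H p.1 p.2) (t / r ^ 2, u (t, r) / r ^ m) :=
    (hH.contDiffAt ((isOpen_lt continuous_const continuous_snd).mem_nhds hv)).differentiableAt
      one_ne_zero
  have hslice : ∀ᶠ s in 𝓝 r,
      HasDerivAt (fun s => u (t, s)) (s ^ (m - 1) * H (t / s ^ 2) (u (t, s) / s ^ m)) s := by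
    have hDslice : ∀ᶠ s in 𝓝 r, (t, s) ∈ D :=
      (continuous_const.prodMk continuous_id).continuousAt.preimage_mem_nhds (hD.mem_nhds hp)
    filter_upwards [hDslice] with s hs
    rw [← hur _ hs]
    exact hasDerivAt_pdr ((hu.contDiffAt (hD.mem_nhds hs)).differentiableAt two_ne_zero)
  have hurr := (hasDerivAt_deriv_of_scaling_ode hr hHdiff hslice).deriv
  unfold HeatEq pdrr
  rw [hurr, hut _ hp, hur _ hp, rpow_sub_one_eq_rpow_sub_two_mul hr.ne', hm,
    rpow_add_one_eq_div_rpow_mul hq hr (hupos _ hp).le, ← hm]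
  linear_combination r ^ (m - 2) * heq2 _ _ hv
    - (n - 1) * r ^ (m - 2) * H (t / r ^ 2) (u (t, r) / r ^ m) * inv_mul_cancel₀ hr.ne'

/-- if `(G,H)` satisfies the second scaling-group resolving equation
and a positive `C²` function `u` satisfies the parametric first-order equations
`u_t = r^(m-2) G(t/r², u/r^m)`, `u_r = r^(m-1) H(t/r², u/r^m)` (with `m = -2/q`),
then `u` solves the semilinear radial heat equation. -/
theorem group_resolving_to_heat (n k q m : ℝ) (hq : q ≠ 0) (hm : m = -2 / q)
    (G H : ℝ → ℝ → ℝ)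
    (hG : ContDiffOn ℝ 1 (fun p : ℝ × ℝ => G p.1 p.2) {p : ℝ × ℝ | 0 < p.2})
    (hH : ContDiffOn ℝ 1 (fun p : ℝ × ℝ => H p.1 p.2) {p : ℝ × ℝ | 0 < p.2})
    (heq2 : ∀ x : ℝ, ∀ v : ℝ, 0 < v →
      G x v - (m + n - 2) * H x v + m * v * deriv (H x) v
        + 2 * x * deriv (fun y => H y v) x - H x v * deriv (H x) v = k * v ^ (q + 1))
    (D : Set (ℝ × ℝ)) (hD : IsOpen D) (hDpos : ∀ p ∈ D, 0 < p.2)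
    (u : ℝ × ℝ → ℝ) (hu : ContDiffOn ℝ 2 u D) (hupos : ∀ p ∈ D, 0 < u p)
    (hut : ∀ p ∈ D, pdt u p = p.2 ^ (m - 2) * G (p.1 / p.2 ^ 2) (u p / p.2 ^ m))
    (hur : ∀ p ∈ D, pdr u p = p.2 ^ (m - 1) * H (p.1 / p.2 ^ 2) (u p / p.2 ^ m)) :
    ∀ p ∈ D, HeatEq n k q u p :=
  group_resolving_to_heat_general n k q m hq hm G H hH heq2 D hD hDpos u hu hupos hut hur
end
end

section
/- Let n, k, q be real constants with q ≠ 0 and set p = -2/q. Suppose G, H : ℝ × (0,∞) → ℝ are C¹ functions satisfying the similarity relation H(x,v) + 2x G(x,v) = p v for all x ∈ ℝ and v > 0. Then: (a) the pair (G,H) identically satisfies the first scaling-group resolving equation (p−2)G − p v G_v − 2x G_x − H_x + H G_v − G H_v = 0; and (b) the pair (G,H) satisfies the second scaling-group resolving equation G − (p+n−2)H + p v H_v + 2x H_x − H H_v = k v^{q+1} if and only if G satisfies −4x²(G_x + G G_v) + (1 + 2(2p+n−4)x) G = p(p+n−2) v + k v^{q+1} for all x ∈ ℝ and v > 0. -/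
/-!
Along the similarity relation `H = m v - 2 x G`, every occurrence of `H`, `H_x` and `H_v` in the
two resolving equations can be expressed through `G`, `G_x` and `G_v`. Substituting these
expressions, the first resolving equation collapses to `0 = 0`, and the second one becomes the
reduced equation for `G` after a linear rearrangement.
-/

section Similarity

variable {G H : ℝ → ℝ → ℝ} {m x v : ℝ}

lemma DifferentiableAt.partial_fst {f : ℝ → ℝ → ℝ}
    (h : DifferentiableAt ℝ (fun p : ℝ × ℝ => f p.1 p.2) (x, v)) :
    DifferentiableAt ℝ (fun y => f y v) x :=
  h.comp (f := fun y => (y, v)) x (by fun_prop)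

lemma DifferentiableAt.partial_snd {f : ℝ → ℝ → ℝ}
    (h : DifferentiableAt ℝ (fun p : ℝ × ℝ => f p.1 p.2) (x, v)) :
    DifferentiableAt ℝ (f x) v :=
  h.comp (f := fun w => (x, w)) v (by fun_prop)

lemma deriv_snd_eq_of_similarity (hrel : ∀ x v : ℝ, 0 < v → H x v + 2 * x * G x v = m * v)
    (hv : 0 < v) (hG : DifferentiableAt ℝ (G x) v) :
    deriv (H x) v = m - 2 * x * deriv (G x) v := by
  have hH : H x =ᶠ[nhds v] fun w => m * w - 2 * x * G x w := by
    filter_upwards [Ioi_mem_nhds hv] with w hw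
    linarith [hrel x w hw]
  have hderiv : HasDerivAt (fun w => m * w - 2 * x * G x w) (m - 2 * x * deriv (G x) v) v := by
    simpa using ((hasDerivAt_id' v).const_mul m).fun_sub (hG.hasDerivAt.const_mul (2 * x))
  exact hH.deriv_eq.trans hderiv.deriv

lemma deriv_fst_eq_of_similarity (hrel : ∀ x v : ℝ, 0 < v → H x v + 2 * x * G x v = m * v)
    (hv : 0 < v) (hG : DifferentiableAt ℝ (fun y => G y v) x) :
    deriv (fun y => H y v) x = -2 * G x v - 2 * x * deriv (fun y => G y v) x := by
  have hH : (fun y => H y v) = fun y => m * v - 2 * y * G y v :=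
    funext fun y => by linarith [hrel y v hv]
  have hderiv : HasDerivAt (fun y => m * v - 2 * y * G y v)
      (-2 * G x v - 2 * x * deriv (fun y => G y v) x) x :=
    ((((hasDerivAt_id' x).const_mul 2).fun_mul hG.hasDerivAt).const_sub (m * v)).congr_deriv
      (by ring)
  rw [hH, hderiv.deriv]

end Similarity

theorem similarity_relation_resolving_general (n k q m : ℝ)
    (G H : ℝ → ℝ → ℝ)
    (hG : ContDiffOn ℝ 1 (fun p : ℝ × ℝ => G p.1 p.2) {p : ℝ × ℝ | 0 < p.2})
    (hrel : ∀ x : ℝ, ∀ v : ℝ, 0 < v → H x v + 2 * x * G x v = m * v) :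
    (∀ x : ℝ, ∀ v : ℝ, 0 < v →
      (m - 2) * G x v - m * v * deriv (G x) v - 2 * x * deriv (fun y => G y v) x
        - deriv (fun y => H y v) x + H x v * deriv (G x) v - G x v * deriv (H x) v = 0)
    ∧ ((∀ x : ℝ, ∀ v : ℝ, 0 < v →
        G x v - (m + n - 2) * H x v + m * v * deriv (H x) v
          + 2 * x * deriv (fun y => H y v) x - H x v * deriv (H x) v = k * v ^ (q + 1))
      ↔ (∀ x : ℝ, ∀ v : ℝ, 0 < v →
        -(4 * x ^ 2) * (deriv (fun y => G y v) x + G x v * deriv (G x) v)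
          + (1 + 2 * (2 * m + n - 4) * x) * G x v
          = m * (m + n - 2) * v + k * v ^ (q + 1))) := by
  have hdiff : ∀ x v : ℝ, 0 < v → DifferentiableAt ℝ (fun p : ℝ × ℝ => G p.1 p.2) (x, v) :=
    fun x v hv => (hG.contDiffAt ((isOpen_lt continuous_const continuous_snd).mem_nhds
      hv)).differentiableAt one_ne_zero
  have hsubst : ∀ x v : ℝ, 0 < v → H x v = m * v - 2 * x * G x v ∧
      deriv (H x) v = m - 2 * x * deriv (G x) v ∧
      deriv (fun y => H y v) x = -2 * G x v - 2 * x * deriv (fun y => G y v) x :=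
    fun x v hv => ⟨by linarith [hrel x v hv],
      deriv_snd_eq_of_similarity hrel hv (hdiff x v hv).partial_snd,
      deriv_fst_eq_of_similarity hrel hv (hdiff x v hv).partial_fst⟩
  refine ⟨fun x v hv => ?_, forall₂_congr fun x v => imp_congr_right fun hv => ?_⟩
  all_goals
    obtain ⟨hH, hHv, hHx⟩ := hsubst x v hv
    rw [hH, hHv, hHx]
  · ring
  · constructor <;> intro h <;> linear_combination h

/-- for a pair `(G,H)` satisfying the similarity relation
`H + 2xG = mv` (with `m = -2/q`): (a) the first scaling-group resolving
equation holds identically, and (b) the second resolving equation holds iff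
`G` satisfies the reduced first-order PDE. -/
theorem similarity_relation_resolving (n k q m : ℝ) (hq : q ≠ 0) (hm : m = -2 / q)
    (G H : ℝ → ℝ → ℝ)
    (hG : ContDiffOn ℝ 1 (fun p : ℝ × ℝ => G p.1 p.2) {p : ℝ × ℝ | 0 < p.2})
    (hH : ContDiffOn ℝ 1 (fun p : ℝ × ℝ => H p.1 p.2) {p : ℝ × ℝ | 0 < p.2})
    (hrel : ∀ x : ℝ, ∀ v : ℝ, 0 < v → H x v + 2 * x * G x v = m * v) :
    (∀ x : ℝ, ∀ v : ℝ, 0 < v →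
      (m - 2) * G x v - m * v * deriv (G x) v - 2 * x * deriv (fun y => G y v) x
        - deriv (fun y => H y v) x + H x v * deriv (G x) v - G x v * deriv (H x) v = 0)
    ∧ ((∀ x : ℝ, ∀ v : ℝ, 0 < v →
        G x v - (m + n - 2) * H x v + m * v * deriv (H x) v
          + 2 * x * deriv (fun y => H y v) x - H x v * deriv (H x) v = k * v ^ (q + 1))
      ↔ (∀ x : ℝ, ∀ v : ℝ, 0 < v →
        -(4 * x ^ 2) * (deriv (fun y => G y v) x + G x v * deriv (G x) v)
          + (1 + 2 * (2 * m + n - 4) * x) * G x v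
          = m * (m + n - 2) * v + k * v ^ (q + 1))) :=
  similarity_relation_resolving_general n k q m G H hG hrel
end

section
/- Let n, k, q be real constants with q ≠ 0 and q ≠ -1, and set p = -2/q. Then the pair of functions G(x,v) = k v^{q+1}, H(x,v) = 0 satisfies both equations of the scaling-group resolving system, namely (p−2)G − p v G_v − 2x G_x − H_x + H G_v − G H_v = 0 and G − (p+n−2)H + p v H_v + 2x H_x − H H_v = k v^{q+1}, for all x ∈ ℝ and v > 0. -/
/-!
With `H = 0` every term of the system containing `H` vanishes, so the second equation reads
`G = k v^(q+1)` and the first reduces to `(m - 2) G - m v G_v = 0`. By Euler's identity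
`v G_v = (q + 1) G` this is `-(2 + m q) G = 0`, which holds because `m q = -2`.
-/

noncomputable section

/-- First equation of the scaling-group resolving system at `(x,v)`,
with `m = -2/q` the scaling weight. -/
def Resolving1 (m : ℝ) (G H : ℝ → ℝ → ℝ) (x v : ℝ) : Prop :=
  (m - 2) * G x v - m * v * deriv (G x) v - 2 * x * deriv (fun y => G y v) x
    - deriv (fun y => H y v) x + H x v * deriv (G x) v - G x v * deriv (H x) v = 0

/-- Second equation of the scaling-group resolving system at `(x,v)`. -/
def Resolving2 (n k q m : ℝ) (G H : ℝ → ℝ → ℝ) (x v : ℝ) : Prop :=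
  G x v - (m + n - 2) * H x v + m * v * deriv (H x) v
    + 2 * x * deriv (fun y => H y v) x - H x v * deriv (H x) v = k * v ^ (q + 1)

theorem mul_deriv_const_mul_rpow (k a : ℝ) {v : ℝ} (hv : v ≠ 0) :
    v * deriv (fun w => k * w ^ a) v = a * (k * v ^ a) := by
  rw [deriv_const_mul _ (Real.differentiableAt_rpow_const_of_ne a hv), Real.deriv_rpow_const,
    Real.rpow_sub_one hv]
  field_simp

theorem resolving1_const_mul_rpow_zero (k q m x : ℝ) {v : ℝ} (hmq : m * q = -2) (hv : v ≠ 0) :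
    Resolving1 m (fun _ w => k * w ^ (q + 1)) (fun _ _ => 0) x v := by
  have euler := mul_deriv_const_mul_rpow k (q + 1) hv
  simp only [Resolving1, deriv_const, mul_zero, zero_mul, sub_zero, add_zero]
  linear_combination (-m) * euler - k * v ^ (q + 1) * hmq

theorem resolving2_const_mul_rpow_zero (n k q m x v : ℝ) :
    Resolving2 n k q m (fun _ w => k * w ^ (q + 1)) (fun _ _ => 0) x v := by
  simp [Resolving2]

theorem resolving_solution_one_term_general (n k q m : ℝ) (hq : q ≠ 0)
    (hm : m = -2 / q) (G H : ℝ → ℝ → ℝ)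
    (hG : ∀ x v : ℝ, G x v = k * v ^ (q + 1))
    (hH : ∀ x v : ℝ, H x v = 0) :
    ∀ x : ℝ, ∀ v : ℝ, 0 < v → Resolving1 m G H x v ∧ Resolving2 n k q m G H x v := by
  obtain rfl : G = fun _ w => k * w ^ (q + 1) := funext₂ hG
  obtain rfl : H = fun _ _ => 0 := funext₂ hH
  have hmq : m * q = -2 := by rw [hm, div_mul_cancel₀ _ hq]
  intro x v hv
  exact ⟨resolving1_const_mul_rpow_zero k q m x hmq hv.ne',
    resolving2_const_mul_rpow_zero n k q m x v⟩

/-- `G = k v^(q+1)`, `H = 0` solves the scaling-group resolving system. -/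
theorem resolving_solution_one_term (n k q m : ℝ) (hq : q ≠ 0) (hq1 : q ≠ -1)
    (hm : m = -2 / q) (G H : ℝ → ℝ → ℝ)
    (hG : ∀ x v : ℝ, G x v = k * v ^ (q + 1))
    (hH : ∀ x v : ℝ, H x v = 0) :
    ∀ x : ℝ, ∀ v : ℝ, 0 < v → Resolving1 m G H x v ∧ Resolving2 n k q m G H x v :=
  resolving_solution_one_term_general n k q m hq hm G H hG hH
end
end

section
/- Let n, k be real constants with n ∉ {1, 2, 3, 4}, let q = 2/(2−n) (so q ≠ 0, and assume q ≠ -1, i.e. n ≠ 4), set p = n−2, and assume −k(n−2)/(n−3) > 0. Then for each choice of sign ε ∈ {1, −1}, the pair of functions G(x,v) = ε(4−n)·√(−k(n−2)/(n−3))·v^{(n−3)/(n−2)} and H(x,v) = G(x,v)/(4−n) + (2−n)v satisfies both equations of the scaling-group resolving system, (p−2)G − p v G_v − 2x G_x − H_x + H G_v − G H_v = 0 and G − (p+n−2)H + p v H_v + 2x H_x − H H_v = k v^{q+1}, for all x ∈ ℝ and v > 0. -/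
noncomputable section

/-! The solution is `x`-independent, so both equations become ODEs in `v`, and for the ansatz
`G = c v^α`, `H = a G + b v` each side is a combination of `v`, `v^α` and `v^(2α-1)`. With
`α = (n-3)/(n-2)`, `a = 1/(4-n)`, `b = 2-n` the first equation vanishes identically, the `v`
and `v^α` coefficients of the second one vanish, and `v^(2α-1) = v^(q+1)` with coefficient
`-a²c²α = k` because `c² = (4-n)² · (-k(n-2)/(n-3))`. -/

theorem resolving1_autonomous_iff (m : ℝ) (g h : ℝ → ℝ) (x v : ℝ) :
    Resolving1 m (fun _ => g) (fun _ => h) x v ↔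
      (m - 2) * g v - m * v * deriv g v + h v * deriv g v - g v * deriv h v = 0 := by
  simp only [Resolving1, deriv_const', mul_zero, sub_zero]

theorem resolving2_autonomous_iff (n k q m : ℝ) (g h : ℝ → ℝ) (x v : ℝ) :
    Resolving2 n k q m (fun _ => g) (fun _ => h) x v ↔
      g v - (m + n - 2) * h v + m * v * deriv h v - h v * deriv h v = k * v ^ (q + 1) := by
  simp only [Resolving2, deriv_const', mul_zero, add_zero]

theorem rpow_eq_rpow_sub_one_mul {v : ℝ} (hv : 0 < v) (α : ℝ) : v ^ α = v ^ (α - 1) * v := by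
  rw [← Real.rpow_add_one hv.ne', sub_add_cancel]

theorem deriv_const_mul_rpow {c α v : ℝ} (hv : 0 < v) :
    deriv (fun w => c * w ^ α) v = c * (α * v ^ (α - 1)) :=
  ((Real.hasDerivAt_rpow_const (Or.inl hv.ne')).const_mul c).deriv

theorem deriv_power_ansatz {a b c α v : ℝ} (hv : 0 < v) :
    deriv (fun w => a * (c * w ^ α) + b * w) v = a * (c * (α * v ^ (α - 1))) + b := by
  have hpow := ((Real.hasDerivAt_rpow_const (p := α) (Or.inl hv.ne')).const_mul c).const_mul a
  simpa using (hpow.fun_add ((hasDerivAt_id v).const_mul b)).deriv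

theorem resolving1_power_ansatz {m a b c α x v : ℝ} (hv : 0 < v)
    (hα : m - 2 - m * α + b * α - b = 0) :
    Resolving1 m (fun _ w => c * w ^ α) (fun _ w => a * (c * w ^ α) + b * w) x v := by
  rw [resolving1_autonomous_iff, deriv_const_mul_rpow hv, deriv_power_ansatz hv,
    rpow_eq_rpow_sub_one_mul hv]
  linear_combination (c * v ^ (α - 1) * v) * hα

theorem resolving2_power_ansatz {n k q m a b c α x v : ℝ} (hv : 0 < v)
    (hb : b * (n - 2 + b) = 0) (hvα : 1 - (m + n - 2) * a + m * a * α - a * b * (1 + α) = 0)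
    (hq : q + 1 = (α - 1) + α) (hk : k = -(a ^ 2 * c ^ 2 * α)) :
    Resolving2 n k q m (fun _ w => c * w ^ α) (fun _ w => a * (c * w ^ α) + b * w) x v := by
  rw [resolving2_autonomous_iff, deriv_power_ansatz hv, hq, Real.rpow_add hv,
    rpow_eq_rpow_sub_one_mul hv]
  linear_combination (-v) * hb + (c * v ^ (α - 1) * v) * hvα - ((v ^ (α - 1)) ^ 2 * v) * hk

theorem sq_sign_mul_sqrt {e K : ℝ} (he : e = 1 ∨ e = -1) (hK : 0 ≤ K) : (e * √K) ^ 2 = K := by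
  rcases he with rfl | rfl <;> simp [Real.sq_sqrt hK]

theorem resolving_solution_two_term_general (n k q m e : ℝ)
    (hn2 : n ≠ 2) (hn3 : n ≠ 3) (hn4 : n ≠ 4)
    (hq : q = 2 / (2 - n)) (hm : m = n - 2)
    (hpos : 0 < -k * (n - 2) / (n - 3)) (he : e = 1 ∨ e = -1)
    (G H : ℝ → ℝ → ℝ)
    (hG : ∀ x v : ℝ, G x v
      = e * (4 - n) * Real.sqrt (-k * (n - 2) / (n - 3)) * v ^ ((n - 3) / (n - 2)))
    (hH : ∀ x v : ℝ, H x v = G x v / (4 - n) + (2 - n) * v) :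
    ∀ x : ℝ, ∀ v : ℝ, 0 < v → Resolving1 m G H x v ∧ Resolving2 n k q m G H x v := by
  intro x v hv
  have hc2 : (e * (4 - n) * √(-k * (n - 2) / (n - 3))) ^ 2
      = (4 - n) ^ 2 * (-k * (n - 2) / (n - 3)) := by
    rw [mul_right_comm, mul_pow, sq_sign_mul_sqrt he hpos.le, mul_comm]
  generalize e * (4 - n) * √(-k * (n - 2) / (n - 3)) = c at hG hc2
  have hG' : G = fun _ w => c * w ^ ((n - 3) / (n - 2)) := funext₂ hG
  have hH' : H = fun _ w => (4 - n)⁻¹ * (c * w ^ ((n - 3) / (n - 2))) + (2 - n) * w := by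
    funext y w; rw [hH, hG, div_eq_inv_mul]
  subst hG' hH' hq hm
  refine ⟨resolving1_power_ansatz hv (by field_simp; ring),
    resolving2_power_ansatz hv (by ring) (by field_simp; ring) (by field_simp; ring) ?_⟩
  rw [hc2]
  field_simp

/-- the two-term solution of the scaling-group resolving system
for `q = 2/(2-n)`, `m = n-2`, `n ∉ {1,2,3,4}`. -/
theorem resolving_solution_two_term (n k q m e : ℝ)
    (hn1 : n ≠ 1) (hn2 : n ≠ 2) (hn3 : n ≠ 3) (hn4 : n ≠ 4)
    (hq : q = 2 / (2 - n)) (hq1 : q ≠ -1) (hm : m = n - 2)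
    (hpos : 0 < -k * (n - 2) / (n - 3)) (he : e = 1 ∨ e = -1)
    (G H : ℝ → ℝ → ℝ)
    (hG : ∀ x v : ℝ, G x v
      = e * (4 - n) * Real.sqrt (-k * (n - 2) / (n - 3)) * v ^ ((n - 3) / (n - 2)))
    (hH : ∀ x v : ℝ, H x v = G x v / (4 - n) + (2 - n) * v) :
    ∀ x : ℝ, ∀ v : ℝ, 0 < v → Resolving1 m G H x v ∧ Resolving2 n k q m G H x v :=
  resolving_solution_two_term_general n k q m e hn2 hn3 hn4 hq hm hpos he G H hG hH
end
end

section
/- Let n = 5/2, q = −4, p = 1/2, and let k > 0. Then for each choice of sign ε ∈ {1, −1}, the pair of functions G(x,v) = 3v/(3x+1) + ε·3√k/(2v) and H(x,v) = (2/3)G(x,v) − v/2 satisfies both equations of the scaling-group resolving system, (p−2)G − p v G_v − 2x G_x − H_x + H G_v − G H_v = 0 and G − (p+n−2)H + p v H_v + 2x H_x − H H_v = k v^{q+1}, for all x ≠ −1/3 and v > 0. -/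
/-!
The candidate pair is rational in `x` and `v`, so both equations become identities between
rational functions once the four partial derivatives are computed. The first holds for every
value of the constant `c = 3ε√k` in `G`; in the second, `c` survives only through `c² / v³`,
which matches `k v^{q+1} = k / v³` exactly when `c² = 9k`, i.e. because `ε² = 1`.
-/

noncomputable section

namespace ScalingResolvent

def solG (c x v : ℝ) : ℝ := 3 * v / (3 * x + 1) + c / (2 * v)

def solH (c x v : ℝ) : ℝ := 2 / 3 * solG c x v - v / 2

variable {c x v : ℝ}

theorem hasDerivAt_solG_v (hv : v ≠ 0) :
    HasDerivAt (solG c x) (3 / (3 * x + 1) - c / (2 * v ^ 2)) v := by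
  have h := (((hasDerivAt_id' v).const_mul 3).div_const (3 * x + 1)).add
    ((hasDerivAt_const v c).div ((hasDerivAt_id' v).const_mul 2) (by positivity))
  refine h.congr_deriv ?_
  field_simp
  ring

theorem hasDerivAt_solG_x (hx : 3 * x + 1 ≠ 0) :
    HasDerivAt (fun y => solG c y v) (-(9 * v) / (3 * x + 1) ^ 2) x := by
  have h := ((hasDerivAt_const x (3 * v)).div
    (((hasDerivAt_id' x).const_mul 3).add_const 1) hx).add_const (c / (2 * v))
  exact h.congr_deriv (by ring)

theorem hasDerivAt_solH_v (hv : v ≠ 0) :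
    HasDerivAt (solH c x) (2 / 3 * (3 / (3 * x + 1) - c / (2 * v ^ 2)) - 1 / 2) v :=
  ((hasDerivAt_solG_v hv).const_mul (2 / 3)).sub ((hasDerivAt_id v).div_const 2)

theorem hasDerivAt_solH_x (hx : 3 * x + 1 ≠ 0) :
    HasDerivAt (fun y => solH c y v) (2 / 3 * (-(9 * v) / (3 * x + 1) ^ 2)) x :=
  ((hasDerivAt_solG_x hx).const_mul (2 / 3)).sub_const (v / 2)

theorem resolving1_sol (hx : 3 * x + 1 ≠ 0) (hv : v ≠ 0) :
    Resolving1 (1 / 2) (solG c) (solH c) x v := by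
  unfold Resolving1
  rw [(hasDerivAt_solG_v hv).deriv, (hasDerivAt_solG_x hx).deriv,
    (hasDerivAt_solH_v hv).deriv, (hasDerivAt_solH_x hx).deriv]
  simp only [solH, solG]
  field_simp
  ring

theorem resolving2_sol {k : ℝ} (hc : c ^ 2 = 9 * k) (hx : 3 * x + 1 ≠ 0) (hv : v ≠ 0) :
    Resolving2 (5 / 2) k (-4) (1 / 2) (solG c) (solH c) x v := by
  unfold Resolving2
  rw [(hasDerivAt_solH_v hv).deriv, (hasDerivAt_solH_x hx).deriv,
    show (-4 : ℝ) + 1 = ((-3 : ℤ) : ℝ) by norm_num, Real.rpow_intCast]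
  simp only [solH, solG]
  field_simp
  linear_combination 4 * (3 * x + 1) ^ 2 * hc

end ScalingResolvent

open ScalingResolvent in
/-- solution of the scaling-group resolving system for
`n = 5/2`, `q = -4`, `m = 1/2`, `k > 0`. -/
theorem resolving_solution_q_neg_four (n k q m e : ℝ)
    (hn : n = 5 / 2) (hq : q = -4) (hm : m = 1 / 2) (hk : 0 < k)
    (he : e = 1 ∨ e = -1)
    (G H : ℝ → ℝ → ℝ)
    (hG : ∀ x v : ℝ, G x v = 3 * v / (3 * x + 1) + e * (3 * Real.sqrt k) / (2 * v))
    (hH : ∀ x v : ℝ, H x v = (2 / 3) * G x v - v / 2) :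
    ∀ x : ℝ, x ≠ -1 / 3 → ∀ v : ℝ, 0 < v →
      Resolving1 m G H x v ∧ Resolving2 n k q m G H x v := by
  intro x hx v hv
  subst hn hq hm
  obtain rfl : G = solG (e * (3 * Real.sqrt k)) := funext₂ hG
  obtain rfl : H = solH (e * (3 * Real.sqrt k)) := funext₂ hH
  have hx' : 3 * x + 1 ≠ 0 := fun h => hx (by linarith)
  have he2 : e ^ 2 = 1 := by rcases he with rfl | rfl <;> norm_num
  have hc : (e * (3 * Real.sqrt k)) ^ 2 = 9 * k := by
    rw [mul_pow, mul_pow, he2, Real.sq_sqrt hk.le]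
    ring
  exact ⟨resolving1_sol hx' hv.ne', resolving2_sol hc hx' hv.ne'⟩
end
end

section
/- Let n = 5/2, q = 2, p = −1, and let k < 0. Then for each choice of sign ε ∈ {1, −1}, the pair of functions G(x,v) = 3v(1 + ε√(−2k)·v)/(3x+1) and H(x,v) = (3x+1)G(x,v)/6 − ((3x−1)/(3x+1))·v satisfies both equations of the scaling-group resolving system, (p−2)G − p v G_v − 2x G_x − H_x + H G_v − G H_v = 0 and G − (p+n−2)H + p v H_v + 2x H_x − H H_v = k v^{q+1}, for all x ≠ −1/3 and v > 0. -/
/-!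
Put `s = e √(-2k)`, so that `s² = -2k`. Then `G = 3v(1 + sv)/(3x + 1)` and, away from
`x = -1/3`, `H` simplifies to `v(1 + sv)/2 - (3x - 1)v/(3x + 1)`. Both equations only involve
the germ of `(G, H)` at `x`, so they may be checked on these closed forms, whose partial
derivatives are explicit rational functions. The first equation then holds for every `s`, and
the second reduces to `s² = -2k`.
-/

noncomputable section

open Filter Topology

def resolvingSolG (s x v : ℝ) : ℝ := 3 * v * (1 + s * v) / (3 * x + 1)

def resolvingSolH (s x v : ℝ) : ℝ := v * (1 + s * v) / 2 - (3 * x - 1) / (3 * x + 1) * v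

section Germ

variable {G H G' H' : ℝ → ℝ → ℝ} {x : ℝ}

theorem deriv_fst_congr {F F' : ℝ → ℝ → ℝ} (hF : ∀ᶠ y in 𝓝 x, F y = F' y) (v : ℝ) :
    deriv (fun y => F y v) x = deriv (fun y => F' y v) x :=
  EventuallyEq.deriv_eq (hF.mono fun _ hy => congrFun hy v)

theorem resolving1_congr (hG : ∀ᶠ y in 𝓝 x, G y = G' y) (hH : ∀ᶠ y in 𝓝 x, H y = H' y)
    (m v : ℝ) : Resolving1 m G H x v ↔ Resolving1 m G' H' x v := by
  rw [Resolving1, Resolving1, hG.self_of_nhds, hH.self_of_nhds, deriv_fst_congr hG,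
    deriv_fst_congr hH]

theorem resolving2_congr (hG : ∀ᶠ y in 𝓝 x, G y = G' y) (hH : ∀ᶠ y in 𝓝 x, H y = H' y)
    (n k q m v : ℝ) : Resolving2 n k q m G H x v ↔ Resolving2 n k q m G' H' x v := by
  rw [Resolving2, Resolving2, hG.self_of_nhds, hH.self_of_nhds, deriv_fst_congr hH]

end Germ

section Derivatives

variable (s x v : ℝ)

theorem hasDerivAt_resolvingSolG_snd :
    HasDerivAt (resolvingSolG s x) ((3 + 6 * s * v) / (3 * x + 1)) v :=
  ((hasDerivAt_id' (x := v)).const_mul 3 |>.mul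
    ((hasDerivAt_id' (x := v)).const_mul s |>.const_add 1) |>.div_const (3 * x + 1)).congr_deriv
    (by ring)

theorem hasDerivAt_resolvingSolH_snd :
    HasDerivAt (resolvingSolH s x) ((1 + 2 * s * v) / 2 - (3 * x - 1) / (3 * x + 1)) v :=
  ((hasDerivAt_id' (x := v)).mul ((hasDerivAt_id' (x := v)).const_mul s |>.const_add 1)
    |>.div_const 2 |>.sub ((hasDerivAt_id' (x := v)).const_mul ((3 * x - 1) / (3 * x + 1))))
    |>.congr_deriv (by ring)

variable {x}

theorem hasDerivAt_resolvingSolG_fst (hx : 3 * x + 1 ≠ 0) :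
    HasDerivAt (fun y => resolvingSolG s y v) (-(9 * v * (1 + s * v)) / (3 * x + 1) ^ 2) x :=
  ((hasDerivAt_const x (3 * v * (1 + s * v))).div
    ((hasDerivAt_id' (x := x)).const_mul 3 |>.add_const 1) hx).congr_deriv (by ring)

theorem hasDerivAt_resolvingSolH_fst (hx : 3 * x + 1 ≠ 0) :
    HasDerivAt (fun y => resolvingSolH s y v) (-(6 * v) / (3 * x + 1) ^ 2) x :=
  ((hasDerivAt_const x (v * (1 + s * v) / 2)).sub
    (((hasDerivAt_id' (x := x)).const_mul 3 |>.sub_const 1).div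
      ((hasDerivAt_id' (x := x)).const_mul 3 |>.add_const 1) hx |>.mul_const v)).congr_deriv
    (by ring)

end Derivatives

section Solution

variable {s x : ℝ}

theorem resolving1_resolvingSol (hx : 3 * x + 1 ≠ 0) (v : ℝ) :
    Resolving1 (-1) (resolvingSolG s) (resolvingSolH s) x v := by
  rw [Resolving1, (hasDerivAt_resolvingSolG_snd s x v).deriv,
    (hasDerivAt_resolvingSolH_snd s x v).deriv, (hasDerivAt_resolvingSolG_fst s v hx).deriv,
    (hasDerivAt_resolvingSolH_fst s v hx).deriv, resolvingSolG, resolvingSolH]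
  field_simp
  ring

theorem resolving2_resolvingSol {k : ℝ} (hs : s ^ 2 = -2 * k) (hx : 3 * x + 1 ≠ 0) (v : ℝ) :
    Resolving2 (5 / 2) k 2 (-1) (resolvingSolG s) (resolvingSolH s) x v := by
  rw [Resolving2, (hasDerivAt_resolvingSolH_snd s x v).deriv,
    (hasDerivAt_resolvingSolH_fst s v hx).deriv, resolvingSolG, resolvingSolH,
    show (2 : ℝ) + 1 = (3 : ℕ) by norm_num, Real.rpow_natCast]
  field_simp
  linear_combination (-2 * v ^ 3 * (3 * x + 1) ^ 2) * hs

end Solution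

/-- solution of the scaling-group resolving system for
`n = 5/2`, `q = 2`, `m = -1`, `k < 0`. -/
theorem resolving_solution_q_two (n k q m e : ℝ)
    (hn : n = 5 / 2) (hq : q = 2) (hm : m = -1) (hk : k < 0)
    (he : e = 1 ∨ e = -1)
    (G H : ℝ → ℝ → ℝ)
    (hG : ∀ x v : ℝ, G x v = 3 * v * (1 + e * Real.sqrt (-2 * k) * v) / (3 * x + 1))
    (hH : ∀ x v : ℝ, H x v = (3 * x + 1) * G x v / 6 - ((3 * x - 1) / (3 * x + 1)) * v) :
    ∀ x : ℝ, x ≠ -1 / 3 → ∀ v : ℝ, 0 < v →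
      Resolving1 m G H x v ∧ Resolving2 n k q m G H x v := by
  intro x hx v _
  set s := e * Real.sqrt (-2 * k)
  have hs : s ^ 2 = -2 * k := by
    rw [mul_pow, Real.sq_sqrt (by linarith)]
    rcases he with rfl | rfl <;> ring
  have hx' : 3 * x + 1 ≠ 0 := fun h => hx (by linarith)
  have hG' : ∀ᶠ y in 𝓝 x, G y = resolvingSolG s y := .of_forall fun y => funext (hG y)
  -- `H` is junk at `x = -1/3`, so it agrees with `resolvingSolH s` only near `x`.
  have hH' : ∀ᶠ y in 𝓝 x, H y = resolvingSolH s y := by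
    have hnear : ∀ᶠ y in 𝓝 x, 3 * y + 1 ≠ 0 :=
      (by fun_prop : Continuous fun y : ℝ => 3 * y + 1).continuousAt.eventually_ne hx'
    filter_upwards [hnear] with y hy
    funext w
    rw [hH, hG, resolvingSolH]
    field_simp
    ring
  subst hn hq hm
  exact ⟨(resolving1_congr hG' hH' _ v).2 (resolving1_resolvingSol hx' v),
    (resolving2_congr hG' hH' _ _ _ _ v).2 (resolving2_resolvingSol hs hx' v)⟩
end
end

section
/- Let n > 4 and k < 0 be real constants, let q = 2/(2−n) (so q+1 = (n−4)/(n−2)), let c ∈ ℝ, and fix a sign ε ∈ {1, −1}. Define w(t,r) = ε·√(−k/((n−2)(n−3)))·(r/2 − (n−4)(t+c)/r). Then u(t,r) = w(t,r)^{n−2} is a positive solution of the semilinear radial heat equation u_t = u_rr + (n-1) r⁻¹ u_r + k u^{q+1} on any open subset of {(t,r) : r > 0, w(t,r) > 0}, where all non-integer powers are real powers of positive quantities. -/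
noncomputable section

/-!
Writing `u = w ^ m`, the chain rule turns the equation, after division by `m w ^ (m - 2)`, into
`w w_t = w w_rr + (m - 1) w_r² + (n - 1) r⁻¹ w w_r + k / m`, provided `m (q + 1) = m - 2` so that
the nonlinearity `k u ^ (q + 1) = k w ^ (m - 2)` scales like the other terms. For `m = n - 2` and
`q = 2 / (2 - n)` this holds, and for `w = A (r / 2 - (n - 4)(t + c) / r)` the reduced equation is
a rational identity in `t, r` as soon as `k = -A² (n - 2)(n - 3)`.
-/

open Filter Topology

section PowerSubstitution

variable {w : ℝ × ℝ → ℝ} {wr : ℝ → ℝ} {t r m wt wrr : ℝ}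

theorem pdt_rpow (hw : 0 < w (t, r)) (ht : HasDerivAt (fun s => w (s, r)) wt t) :
    pdt (fun p => w p ^ m) (t, r) = m * w (t, r) ^ (m - 1) * wt := by
  rw [pdt, (ht.rpow_const (Or.inl hw.ne')).deriv]
  ring

theorem pdr_rpow (hw : 0 < w (t, r)) (hr : HasDerivAt (fun s => w (t, s)) (wr r) r) :
    pdr (fun p => w p ^ m) (t, r) = m * w (t, r) ^ (m - 1) * wr r := by
  rw [pdr, (hr.rpow_const (Or.inl hw.ne')).deriv]
  ring

theorem pdrr_rpow (hw : 0 < w (t, r))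
    (hr : ∀ᶠ s in 𝓝 r, HasDerivAt (fun s' => w (t, s')) (wr s) s) (hrr : HasDerivAt wr wrr r) :
    pdrr (fun p => w p ^ m) (t, r) =
      m * w (t, r) ^ (m - 1) * wrr + m * (m - 1) * w (t, r) ^ (m - 2) * wr r ^ 2 := by
  have hpos : ∀ᶠ s in 𝓝 r, 0 < w (t, s) :=
    continuousAt_const.eventually_lt hr.self_of_nhds.continuousAt hw
  have hderiv : (fun s => deriv (fun s' => w (t, s') ^ m) s)
      =ᶠ[𝓝 r] fun s => wr s * m * w (t, s) ^ (m - 1) := by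
    filter_upwards [hr, hpos] with s hs hs_pos
    exact (hs.rpow_const (Or.inl hs_pos.ne')).deriv
  have hderiv' : HasDerivAt (fun s => wr s * m * w (t, s) ^ (m - 1))
      (wrr * m * w (t, r) ^ (m - 1) + wr r * m * (wr r * (m - 1) * w (t, r) ^ (m - 1 - 1))) r :=
    (hrr.mul_const m).mul (hr.self_of_nhds.rpow_const (Or.inl hw.ne'))
  rw [pdrr, hderiv.deriv_eq, hderiv'.deriv, show m - 1 - 1 = m - 2 by ring]
  ring

theorem heatEq_rpow_of_reduced {n k q : ℝ} (hq : m * (q + 1) = m - 2) (hw : 0 < w (t, r))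
    (ht : HasDerivAt (fun s => w (s, r)) wt t)
    (hr : ∀ᶠ s in 𝓝 r, HasDerivAt (fun s' => w (t, s')) (wr s) s) (hrr : HasDerivAt wr wrr r)
    (hred : w (t, r) * wt =
      w (t, r) * wrr + (m - 1) * wr r ^ 2 + (n - 1) / r * w (t, r) * wr r + k / m) :
    HeatEq n k q (fun p => w p ^ m) (t, r) := by
  have hm : m ≠ 0 := by
    rintro rfl
    norm_num at hq
  have hpow : (w (t, r) ^ m) ^ (q + 1) = w (t, r) ^ (m - 2) := by
    rw [← Real.rpow_mul hw.le, hq]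
  have hpow_sub_one : w (t, r) ^ (m - 1) = w (t, r) ^ (m - 2) * w (t, r) := by
    rw [← Real.rpow_add_one hw.ne', show m - 2 + 1 = m - 1 by ring]
  rw [HeatEq, pdt_rpow hw ht, pdrr_rpow hw hr hrr, pdr_rpow hw hr.self_of_nhds, hpow,
    hpow_sub_one]
  linear_combination (norm := skip) (m * w (t, r) ^ (m - 2)) * hred
  field_simp
  ring

end PowerSubstitution

def profile (A a c : ℝ) (p : ℝ × ℝ) : ℝ := A * (p.2 / 2 - a * (p.1 + c) / p.2)

section Profile

variable {A a c t r : ℝ}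

theorem hasDerivAt_profile_fst : HasDerivAt (fun s => profile A a c (s, r)) (-(A * a / r)) t := by
  have h := ((((hasDerivAt_id t).add_const c).const_mul a).div_const r).const_sub (r / 2)
  exact (h.const_mul A).congr_deriv (by ring)

theorem hasDerivAt_profile_snd (hr : r ≠ 0) :
    HasDerivAt (fun s => profile A a c (t, s)) (A * (1 / 2 + a * (t + c) / r ^ 2)) r := by
  have h := ((hasDerivAt_id r).div_const 2).sub
    ((hasDerivAt_const r (a * (t + c))).div (hasDerivAt_id r) hr)
  exact (h.const_mul A).congr_deriv (by simp only [id]; ring)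

theorem hasDerivAt_profile_snd_snd (hr : r ≠ 0) :
    HasDerivAt (fun s => A * (1 / 2 + a * (t + c) / s ^ 2)) (-(2 * A * a * (t + c) / r ^ 3)) r := by
  have h := (((hasDerivAt_const r (a * (t + c))).div (hasDerivAt_pow 2 r)
    (pow_ne_zero 2 hr)).const_add (1 / 2)).const_mul A
  exact h.congr_deriv (by field_simp; ring)

theorem profile_reduced_eq (n : ℝ) (hr : r ≠ 0) :
    profile A (n - 4) c (t, r) * -(A * (n - 4) / r) =
      profile A (n - 4) c (t, r) * -(2 * A * (n - 4) * (t + c) / r ^ 3)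
        + (n - 2 - 1) * (A * (1 / 2 + (n - 4) * (t + c) / r ^ 2)) ^ 2
        + (n - 1) / r * profile A (n - 4) c (t, r) * (A * (1 / 2 + (n - 4) * (t + c) / r ^ 2))
        + -(A ^ 2 * (n - 3)) := by
  simp only [profile]
  field_simp
  ring

end Profile

theorem exact_solution_power_general (n k q c e : ℝ)
    (hq : q = 2 / (2 - n)) (he : e = 1 ∨ e = -1)
    (D : Set (ℝ × ℝ))
    (hDsub : D ⊆ {p : ℝ × ℝ | 0 < p.2 ∧
      0 < e * Real.sqrt (-k / ((n - 2) * (n - 3)))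
            * (p.2 / 2 - (n - 4) * (p.1 + c) / p.2)}) :
    ∀ p ∈ D,
      0 < (fun p : ℝ × ℝ =>
          (e * Real.sqrt (-k / ((n - 2) * (n - 3)))
            * (p.2 / 2 - (n - 4) * (p.1 + c) / p.2)) ^ (n - 2)) p ∧
      HeatEq n k q (fun p : ℝ × ℝ =>
          (e * Real.sqrt (-k / ((n - 2) * (n - 3)))
            * (p.2 / 2 - (n - 4) * (p.1 + c) / p.2)) ^ (n - 2)) p := by
  rintro ⟨t, r⟩ hp
  obtain ⟨hr, hw⟩ := hDsub hp
  set X := -k / ((n - 2) * (n - 3)) with hX_def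
  have hX : 0 < X := by
    refine Real.sqrt_ne_zero'.mp fun h => ?_
    simp [h] at hw
  have hn2 : n - 2 ≠ 0 := fun h => by simp [X, h] at hX
  have hn3 : n - 3 ≠ 0 := fun h => by simp [X, h] at hX
  set A := e * Real.sqrt X
  have hA : A ^ 2 = X := by
    rcases he with rfl | rfl <;> simp [A, Real.sq_sqrt hX.le]
  have hk : k / (n - 2) = -(A ^ 2 * (n - 3)) := by
    rw [hA, hX_def]
    field_simp
  have hexp : (n - 2) * (q + 1) = n - 2 - 2 := by
    rw [hq, show 2 - n = -(n - 2) by ring]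
    field_simp
    ring
  refine ⟨Real.rpow_pos_of_pos hw _, heatEq_rpow_of_reduced (w := profile A (n - 4) c) hexp hw
    hasDerivAt_profile_fst ((lt_mem_nhds hr).mono fun s hs => hasDerivAt_profile_snd hs.ne')
    (hasDerivAt_profile_snd_snd hr.ne') ?_⟩
  rw [hk]
  exact profile_reduced_eq n hr.ne'

/-- the exact solution `u = w^(n-2)` with
`w(t,r) = ε √(-k/((n-2)(n-3))) (r/2 - (n-4)(t+c)/r)`, for `n > 4`, `k < 0`,
`q = 2/(2-n)`. -/
theorem exact_solution_power (n k q c e : ℝ) (hn : 4 < n) (hk : k < 0)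
    (hq : q = 2 / (2 - n)) (he : e = 1 ∨ e = -1)
    (D : Set (ℝ × ℝ)) (hD : IsOpen D)
    (hDsub : D ⊆ {p : ℝ × ℝ | 0 < p.2 ∧
      0 < e * Real.sqrt (-k / ((n - 2) * (n - 3)))
            * (p.2 / 2 - (n - 4) * (p.1 + c) / p.2)}) :
    ∀ p ∈ D,
      0 < (fun p : ℝ × ℝ =>
          (e * Real.sqrt (-k / ((n - 2) * (n - 3)))
            * (p.2 / 2 - (n - 4) * (p.1 + c) / p.2)) ^ (n - 2)) p ∧
      HeatEq n k q (fun p : ℝ × ℝ =>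
          (e * Real.sqrt (-k / ((n - 2) * (n - 3)))
            * (p.2 / 2 - (n - 4) * (p.1 + c) / p.2)) ^ (n - 2)) p :=
  exact_solution_power_general n k q c e hq he D hDsub
end
end
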